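/- arXiv:2401.00354 — 5 statements merged into one kernel-verified Lean document; each statement's English description precedes it below -/
import Mathlib

section
/- Let 0 = x̃1 < x̃2 < x̃3 and ȳ1 < ȳ2 < ȳ3 be real numbers, and set m1 = (ȳ2−ȳ1)/x̃2 and m2 = (ȳ3−ȳ1)/x̃3. Assume m1 > m2. Define θ̃0 = ȳ1, θ̃1 = m1·m2·(x̃3−x̃2)/(m1−m2), θ̃2 = (ȳ3−ȳ2)/(m1−m2). Then θ̃1 > 0, θ̃2 > 0, and ȳᵢ = θ̃0 + θ̃1·x̃ᵢ/(x̃ᵢ+θ̃2) for i = 1, 2, 3. Moreover, (θ̃0, θ̃1, θ̃2) is the unique triple (θ0, θ1, θ2) with x̃ᵢ + θ2 ≠ 0 for i = 1, 2, 3 that satisfies these three interpolation equations; in particular, the weighted residual sum of squares vanishes at (θ̃0, θ̃1, θ̃2), so it is the maximum likelihood estimate. -/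
/-!
With `θ0 = ȳ1`, the interpolation condition at a point `x ≠ 0` reads `m (x + θ2) = θ1`,
where `m` is the slope of the chord from `(0, ȳ1)` to `(x, ȳ)`. The two remaining points thus
give a linear system in `(θ1, θ2)` whose determinant is `m1 - m2 ≠ 0`, so it has exactly one
solution, and `m2 x̃3 - m1 x̃2 = ȳ3 - ȳ2` identifies it with the stated triple. Positivity
follows from `m1 > m2 > 0`, and interpolation makes every residual vanish.
-/

section Emax

variable {K : Type*} [Field K]

def emax (θ0 θ1 θ2 x : K) : K := θ0 + θ1 * x / (x + θ2)

@[simp]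
theorem emax_zero (θ0 θ1 θ2 : K) : emax θ0 θ1 θ2 0 = θ0 := by
  simp [emax]

theorem eq_emax_iff_slope_mul {θ0 θ1 θ2 x y : K} (hx : x ≠ 0) (hxθ : x + θ2 ≠ 0) :
    y = emax θ0 θ1 θ2 x ↔ (y - θ0) / x * (x + θ2) = θ1 := by
  unfold emax
  rw [← sub_eq_iff_eq_add', div_mul_eq_mul_div, div_eq_iff hx, eq_div_iff hxθ]

theorem slope_system_iff {m1 m2 x2 x3 θ1 θ2 : K} (hm : m1 ≠ m2) :
    (m1 * (x2 + θ2) = θ1 ∧ m2 * (x3 + θ2) = θ1) ↔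
      θ1 = m1 * m2 / (m1 - m2) * (x3 - x2) ∧ θ2 = (m2 * x3 - m1 * x2) / (m1 - m2) := by
  have hd : m1 - m2 ≠ 0 := sub_ne_zero.mpr hm
  constructor
  · rintro ⟨h2, h3⟩
    have hθ2 : θ2 = (m2 * x3 - m1 * x2) / (m1 - m2) := by
      rw [eq_div_iff hd]; linear_combination h2 - h3
    refine ⟨?_, hθ2⟩
    rw [← h2, hθ2]; field_simp; ring
  · rintro ⟨rfl, rfl⟩
    constructor <;> field_simp <;> ring

end Emax

/-- Analytic MLE for a three-point design in shifted coordinates `x̃1 = 0 < x̃2 < x̃3`,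
for data with increasing concave shape: the stated parameters interpolate the data,
are admissible, are the unique interpolating triple, and make the weighted residual
sum of squares vanish. -/
theorem emax_MLE_shifted (x2 x3 y1 y2 y3 m1 m2 θ0' θ1' θ2' : ℝ)
    (hx2 : 0 < x2) (hx23 : x2 < x3)
    (hy12 : y1 < y2) (hy23 : y2 < y3)
    (hm1 : m1 = (y2 - y1) / x2) (hm2 : m2 = (y3 - y1) / x3)
    (hm : m1 > m2)
    (hθ0 : θ0' = y1)
    (hθ1 : θ1' = m1 * m2 / (m1 - m2) * (x3 - x2))
    (hθ2 : θ2' = (y3 - y2) / (m1 - m2)) :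
    0 < θ1' ∧ 0 < θ2' ∧
    (y1 = θ0' + θ1' * 0 / (0 + θ2') ∧
     y2 = θ0' + θ1' * x2 / (x2 + θ2') ∧
     y3 = θ0' + θ1' * x3 / (x3 + θ2')) ∧
    (∀ θ0 θ1 θ2 : ℝ, (0:ℝ) + θ2 ≠ 0 → x2 + θ2 ≠ 0 → x3 + θ2 ≠ 0 →
      y1 = θ0 + θ1 * 0 / (0 + θ2) →
      y2 = θ0 + θ1 * x2 / (x2 + θ2) →
      y3 = θ0 + θ1 * x3 / (x3 + θ2) →
      θ0 = θ0' ∧ θ1 = θ1' ∧ θ2 = θ2') ∧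
    (∀ n1 n2 n3 : ℝ,
      n1 * (y1 - (θ0' + θ1' * 0 / (0 + θ2')))^2 +
      n2 * (y2 - (θ0' + θ1' * x2 / (x2 + θ2')))^2 +
      n3 * (y3 - (θ0' + θ1' * x3 / (x3 + θ2')))^2 = 0) := by
  have hx3 : 0 < x3 := hx2.trans hx23
  have hm2pos : 0 < m2 := hm2 ▸ div_pos (by linarith) hx3
  have hd : 0 < m1 - m2 := sub_pos.mpr hm
  have hθ2' : θ2' = (m2 * x3 - m1 * x2) / (m1 - m2) := by
    rw [hθ2, hm1, hm2]; field_simp; ring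
  have hθ1pos : 0 < θ1' :=
    hθ1 ▸ mul_pos (div_pos (mul_pos (hm2pos.trans hm) hm2pos) hd) (sub_pos.mpr hx23)
  have hθ2pos : 0 < θ2' := hθ2 ▸ div_pos (sub_pos.mpr hy23) hd
  have hslopes := (slope_system_iff hm.ne').mpr ⟨hθ1, hθ2'⟩
  have interp : ∀ θ1 θ2, x2 + θ2 ≠ 0 → x3 + θ2 ≠ 0 →
      ((y2 = emax y1 θ1 θ2 x2 ∧ y3 = emax y1 θ1 θ2 x3) ↔
        (m1 * (x2 + θ2) = θ1 ∧ m2 * (x3 + θ2) = θ1)) := fun θ1 θ2 h2 h3 => by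
    rw [eq_emax_iff_slope_mul hx2.ne' h2, eq_emax_iff_slope_mul hx3.ne' h3, hm1, hm2]
  obtain ⟨hy2, hy3⟩ := (interp θ1' θ2' (by positivity) (by positivity)).mpr hslopes
  subst hθ0
  refine ⟨hθ1pos, hθ2pos, ⟨(emax_zero _ _ _).symm, hy2, hy3⟩, ?_, ?_⟩
  · intro θ0 θ1 θ2 _ h2 h3 e1 e2 e3
    obtain rfl : θ0 = θ0' := by simpa using e1.symm
    obtain ⟨rfl, rfl⟩ := (slope_system_iff hm.ne').mp ((interp θ1 θ2 h2 h3).mp ⟨e2, e3⟩)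
    exact ⟨rfl, hθ1.symm, hθ2'.symm⟩
  · intro n1 n2 n3
    change n1 * (θ0' - emax θ0' θ1' θ2' 0) ^ 2 + n2 * (y2 - emax θ0' θ1' θ2' x2) ^ 2
      + n3 * (y3 - emax θ0' θ1' θ2' x3) ^ 2 = 0
    rw [← hy2, ← hy3, emax_zero]
    ring
end

section
/- Let x1 < x2 < x3 be real numbers, n1, n2, n3 > 0, and ȳ1, ȳ2, ȳ3 ∈ ℝ with (ȳ2−ȳ1)/(x2−x1) ≤ (ȳ3−ȳ1)/(x3−x1). Let η : [x1, x3] → ℝ be concave. Then there exist real numbers m, q such that Σ_{i=1}^{3} nᵢ·(ȳᵢ − η(xᵢ))² ≥ Σ_{i=1}^{3} nᵢ·(ȳᵢ − (m·xᵢ + q))², with equality possible only when η(x) = m·x + q for all x ∈ [x1, x3]. Moreover, if η is monotone nondecreasing on [x1, x3], then m can be chosen to be nonnegative. -/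
/-!
Let `d` be the coefficient vector of the (scaled) second divided difference at the nodes
`x₁ < x₂ < x₃`: `d ⬝ᵥ u = 0` exactly when `u` is the restriction of an affine function, convex
data have `d ⬝ᵥ y ≥ 0`, and a concave `η` has `d ⬝ᵥ η ≤ 0`. The `n`-weighted projection `p` of `y`
onto the plane `d ⬝ᵥ u = 0` is therefore a line, and `n (y - p) = α d` with `α ≥ 0`, so the
cross term `⟨y - p, p - η⟩ₙ = -α (d ⬝ᵥ η)` is nonnegative and Pythagoras gives
`‖y - η‖ₙ² ≥ ‖y - p‖ₙ² + ‖p - η‖ₙ²`. Equality forces `η = p` at the nodes, and a concave function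
that is affine at three nodes is affine between them. If `p` has slope `m < 0` while `η` is
nondecreasing, the constant line at the weighted mean of `y` is used instead: its cross term is
`-α (d ⬝ᵥ η)` plus `-m` times the weighted covariance of `x` and `η`, which is nonnegative by
Chebyshev's sum inequality.
-/

open Finset

section WeightedLeastSquares

variable {ι : Type*} [Fintype ι] {w y p z d x : ι → ℝ}

theorem sum_mul_sq_sub_le_of_cross_nonneg (hw : ∀ i, 0 < w i)
    (hcross : 0 ≤ ∑ i, w i * (y i - p i) * (p i - z i)) :
    ∑ i, w i * (y i - p i) ^ 2 ≤ ∑ i, w i * (y i - z i) ^ 2 ∧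
      (∑ i, w i * (y i - p i) ^ 2 = ∑ i, w i * (y i - z i) ^ 2 → p = z) := by
  have hsplit : ∑ i, w i * (y i - z i) ^ 2 = ∑ i, w i * (y i - p i) ^ 2 +
      ∑ i, w i * (p i - z i) ^ 2 + 2 * ∑ i, w i * (y i - p i) * (p i - z i) := by
    simp only [mul_sum, ← sum_add_distrib]
    exact sum_congr rfl fun i _ ↦ by ring
  have hsq : ∀ i ∈ univ, 0 ≤ w i * (p i - z i) ^ 2 := fun i _ ↦ by positivity [hw i]
  refine ⟨by linarith [sum_nonneg hsq], fun heq ↦ funext fun i ↦ ?_⟩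
  have hzero := (sum_eq_zero_iff_of_nonneg hsq).1 (by linarith [sum_nonneg hsq]) i (mem_univ i)
  simpa [(hw i).ne', sub_eq_zero] using hzero

theorem exists_weighted_projection_onto_hyperplane (hw : ∀ i, 0 < w i) (hd : d ≠ 0)
    (hy : 0 ≤ d ⬝ᵥ y) :
    ∃ α, 0 ≤ α ∧ ∃ p : ι → ℝ, d ⬝ᵥ p = 0 ∧ ∀ i, w i * (y i - p i) = α * d i := by
  obtain ⟨j, hj⟩ := Function.ne_iff.1 hd
  set s := ∑ i, d i ^ 2 / w i
  have hs : 0 < s :=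
    sum_pos' (fun i _ ↦ by positivity [hw i]) ⟨j, mem_univ j, div_pos (sq_pos_of_ne_zero hj) (hw j)⟩
  set α := (d ⬝ᵥ y) / s
  have hαs : ∑ i, d i * (α * d i / w i) = d ⬝ᵥ y := by
    rw [← div_mul_cancel₀ (d ⬝ᵥ y) hs.ne', mul_sum]
    exact sum_congr rfl fun i _ ↦ by ring
  refine ⟨α, by positivity, fun i ↦ y i - α * d i / w i, ?_, fun i ↦ ?_⟩
  · simp only [dotProduct, mul_sub, sum_sub_distrib] at hαs ⊢
    rw [hαs, sub_self]
  · field_simp [(hw i).ne']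
    ring

theorem sum_mul_residual_mul_eq {α : ℝ} (u : ι → ℝ) (hres : ∀ i, w i * (y i - p i) = α * d i) :
    ∑ i, w i * (y i - p i) * (u i - z i) = α * (d ⬝ᵥ u - d ⬝ᵥ z) := by
  simp only [hres, dotProduct, ← sum_sub_distrib, mul_sum]
  exact sum_congr rfl fun i _ ↦ by ring

theorem Monovary.sum_mul_sum_le_sum_mul_sum_mul (hw : ∀ i, 0 ≤ w i) (hzx : Monovary z x) :
    (∑ i, w i * x i) * ∑ i, w i * z i ≤ (∑ i, w i) * ∑ i, w i * x i * z i := by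
  set A : ι → ι → ℝ := fun i j ↦ w i * (w j * x j * z j) - w i * x i * (w j * z j)
  have hA : ∑ i, ∑ j, A i j =
      (∑ i, w i) * ∑ i, w i * x i * z i - (∑ i, w i * x i) * ∑ i, w i * z i := by
    simp only [A, sum_sub_distrib, sum_mul_sum]
  have hsymm : ∑ i, ∑ j, w i * w j * ((z j - z i) * (x j - x i)) =
      ∑ i, ∑ j, A i j + ∑ i, ∑ j, A j i := by
    rw [← sum_add_distrib]
    refine sum_congr rfl fun i _ ↦ ?_
    rw [← sum_add_distrib]
    exact sum_congr rfl fun j _ ↦ by ring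
  have hnonneg : 0 ≤ ∑ i, ∑ j, w i * w j * ((z j - z i) * (x j - x i)) :=
    sum_nonneg fun i _ ↦ sum_nonneg fun j _ ↦
      mul_nonneg (mul_nonneg (hw i) (hw j)) (hzx.sub_mul_sub_nonneg i j)
  rw [hsymm, sum_comm (f := fun i j ↦ A j i), hA] at hnonneg
  linarith

theorem sum_mul_sub_const_mul_nonneg [Nonempty ι] {m q α c : ℝ} (hw : ∀ i, 0 < w i)
    (hres : ∀ i, w i * (y i - (m * x i + q)) = α * d i) (hd : ∑ i, d i = 0)
    (hc : c * ∑ i, w i = ∑ i, w i * y i) (hα : 0 ≤ α) (hdz : d ⬝ᵥ z ≤ 0) (hm : m ≤ 0)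
    (hcov : (∑ i, w i * x i) * ∑ i, w i * z i ≤ (∑ i, w i) * ∑ i, w i * x i * z i) :
    0 ≤ ∑ i, w i * (y i - c) * (c - z i) := by
  have hW : 0 < ∑ i, w i := sum_pos (fun i _ ↦ hw i) univ_nonempty
  have hy : ∀ i, w i * y i = m * (w i * x i) + q * w i + α * d i := fun i ↦ by
    linear_combination hres i
  have hyz : ∀ i, w i * y i * z i = m * (w i * x i * z i) + q * (w i * z i) + α * (d i * z i) :=
    fun i ↦ by rw [hy]; ring
  have hSy : ∑ i, w i * y i = m * ∑ i, w i * x i + q * ∑ i, w i := by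
    simp only [hy, sum_add_distrib, ← mul_sum, hd, mul_zero, add_zero]
  have hSyz : ∑ i, w i * y i * z i =
      m * ∑ i, w i * x i * z i + q * ∑ i, w i * z i + α * d ⬝ᵥ z := by
    simp only [hyz, sum_add_distrib, ← mul_sum, dotProduct]
  have hcross : ∑ i, w i * (y i - c) * (c - z i) =
      c * ∑ i, w i * y i - ∑ i, w i * y i * z i - c ^ 2 * ∑ i, w i + c * ∑ i, w i * z i := by
    simp only [mul_sum, ← sum_sub_distrib, ← sum_add_distrib]
    exact sum_congr rfl fun i _ ↦ by ring
  have key : (∑ i, w i) * ∑ i, w i * (y i - c) * (c - z i) =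
      -m * ((∑ i, w i) * ∑ i, w i * x i * z i - (∑ i, w i * x i) * ∑ i, w i * z i) +
        α * (∑ i, w i) * -(d ⬝ᵥ z) := by
    rw [hcross]
    linear_combination (-c * ∑ i, w i + ∑ i, w i * z i) * hc + (∑ i, w i * z i) * hSy -
      (∑ i, w i) * hSyz
  refine nonneg_of_mul_nonneg_right ?_ hW
  rw [key]
  exact add_nonneg (mul_nonneg (neg_nonneg.2 hm) (sub_nonneg.2 hcov))
    (mul_nonneg (mul_nonneg hα hW.le) (neg_nonneg.2 hdz))

end WeightedLeastSquares

section ThreePoints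

variable {x : Fin 3 → ℝ}

/-- `secondDiffCoeffs x ⬝ᵥ u` is `(x 1 - x 0) (x 2 - x 1) (x 2 - x 0)` times the second divided
difference of the values `u` at the nodes `x`. -/
def secondDiffCoeffs (x : Fin 3 → ℝ) : Fin 3 → ℝ := ![x 2 - x 1, x 0 - x 2, x 1 - x 0]

theorem secondDiffCoeffs_dotProduct (x u : Fin 3 → ℝ) :
    secondDiffCoeffs x ⬝ᵥ u = (x 2 - x 1) * u 0 + (x 0 - x 2) * u 1 + (x 1 - x 0) * u 2 := by
  simp only [dotProduct, secondDiffCoeffs, Fin.sum_univ_three, Matrix.cons_val_zero,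
    Matrix.cons_val_one, Matrix.cons_val]

theorem secondDiffCoeffs_dotProduct_affine (x : Fin 3 → ℝ) (m q : ℝ) :
    secondDiffCoeffs x ⬝ᵥ (fun i ↦ m * x i + q) = 0 := by
  rw [secondDiffCoeffs_dotProduct]
  ring

theorem sum_secondDiffCoeffs (x : Fin 3 → ℝ) : ∑ i, secondDiffCoeffs x i = 0 := by
  simp [secondDiffCoeffs, Fin.sum_univ_three]

theorem secondDiffCoeffs_ne_zero (h : x 0 ≠ x 2) : secondDiffCoeffs x ≠ 0 :=
  Function.ne_iff.2 ⟨1, by simpa [secondDiffCoeffs, sub_eq_zero] using h⟩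

theorem exists_affine_of_secondDiffCoeffs_dotProduct_eq_zero (h : x 0 ≠ x 2) {u : Fin 3 → ℝ}
    (hu : secondDiffCoeffs x ⬝ᵥ u = 0) : ∃ m q : ℝ, ∀ i, u i = m * x i + q := by
  have h' : x 2 - x 0 ≠ 0 := sub_ne_zero.2 h.symm
  refine ⟨(u 2 - u 0) / (x 2 - x 0), u 0 - (u 2 - u 0) / (x 2 - x 0) * x 0, fun i ↦ ?_⟩
  rw [secondDiffCoeffs_dotProduct] at hu
  field_simp
  fin_cases i <;> simp only [Fin.zero_eta, Fin.mk_one, Fin.reduceFinMk] <;> linarith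

theorem secondDiffCoeffs_dotProduct_nonneg_iff (h01 : x 0 < x 1) (h12 : x 1 < x 2)
    (u : Fin 3 → ℝ) :
    0 ≤ secondDiffCoeffs x ⬝ᵥ u ↔ (u 1 - u 0) / (x 1 - x 0) ≤ (u 2 - u 0) / (x 2 - x 0) := by
  rw [div_le_div_iff₀ (by linarith) (by linarith), secondDiffCoeffs_dotProduct]
  constructor <;> intro h <;> linarith

theorem apply_mem_Icc_of_lt (h01 : x 0 < x 1) (h12 : x 1 < x 2) (i : Fin 3) :
    x i ∈ Set.Icc (x 0) (x 2) := by
  fin_cases i <;> simp only [Fin.zero_eta, Fin.mk_one, Fin.reduceFinMk, Set.mem_Icc] <;>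
    exact ⟨by linarith, by linarith⟩

theorem ConcaveOn.secondDiffCoeffs_dotProduct_nonpos {f : ℝ → ℝ}
    (hf : ConcaveOn ℝ (Set.Icc (x 0) (x 2)) f) (h01 : x 0 < x 1) (h12 : x 1 < x 2) :
    secondDiffCoeffs x ⬝ᵥ (fun i ↦ f (x i)) ≤ 0 := by
  have hslope := hf.slope_anti_adjacent (apply_mem_Icc_of_lt h01 h12 0)
    (apply_mem_Icc_of_lt h01 h12 2) h01 h12
  rw [div_le_div_iff₀ (by linarith) (by linarith)] at hslope
  rw [secondDiffCoeffs_dotProduct]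
  linarith

theorem ConcaveOn.eqOn_of_eq_at_three {f : ℝ → ℝ} {m q : ℝ}
    (hf : ConcaveOn ℝ (Set.Icc (x 0) (x 2)) f) (h01 : x 0 < x 1) (h12 : x 1 < x 2)
    (heq : ∀ i, f (x i) = m * x i + q) : Set.EqOn f (fun t ↦ m * t + q) (Set.Icc (x 0) (x 2)) := by
  have hmem := apply_mem_Icc_of_lt h01 h12
  have hg : ConcaveOn ℝ (Set.Icc (x 0) (x 2)) fun t ↦ f t - (m * t + q) :=
    hf.sub (((LinearMap.mul ℝ ℝ m).convexOn (convex_Icc _ _)).add_const q)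
  have hg0 : ∀ i, f (x i) - (m * x i + q) = 0 := fun i ↦ sub_eq_zero.2 (heq i)
  intro t ht
  have hlow := hg.ge_on_segment (hmem 0) (hmem 2) (by rwa [segment_eq_Icc (h01.trans h12).le])
  have hup : f t - (m * t + q) ≤ f (x 1) - (m * x 1 + q) := by
    rcases le_total t (x 1) with htx | htx
    · exact hg.left_le_of_le_right'' ht (hmem 2) htx h12 (by rw [hg0, hg0])
    · exact hg.right_le_of_le_left'' (hmem 0) ht h01 htx (by rw [hg0, hg0])
  simp only [hg0, min_self] at hlow hup
  linarith

theorem exists_affine_cross_nonneg {n y : Fin 3 → ℝ} {f : ℝ → ℝ} (hn : ∀ i, 0 < n i)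
    (h01 : x 0 < x 1) (h12 : x 1 < x 2) (hy : 0 ≤ secondDiffCoeffs x ⬝ᵥ y)
    (hf : ConcaveOn ℝ (Set.Icc (x 0) (x 2)) f) :
    ∃ m q : ℝ, 0 ≤ ∑ i, n i * (y i - (m * x i + q)) * (m * x i + q - f (x i)) ∧
      (MonotoneOn f (Set.Icc (x 0) (x 2)) → 0 ≤ m) := by
  have hfx := hf.secondDiffCoeffs_dotProduct_nonpos h01 h12
  have h02 := (h01.trans h12).ne
  obtain ⟨α, hα, p, hp, hres⟩ :=
    exists_weighted_projection_onto_hyperplane hn (secondDiffCoeffs_ne_zero h02) hy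
  obtain ⟨m, q, hpmq⟩ := exists_affine_of_secondDiffCoeffs_dotProduct_eq_zero h02 hp
  simp only [hpmq] at hres
  by_cases hdecr : MonotoneOn f (Set.Icc (x 0) (x 2)) ∧ m < 0
  swap
  · refine ⟨m, q, ?_, fun hmono ↦ not_lt.1 fun hm ↦ hdecr ⟨hmono, hm⟩⟩
    rw [sum_mul_residual_mul_eq (fun i ↦ m * x i + q) (z := fun i ↦ f (x i)) hres,
      secondDiffCoeffs_dotProduct_affine]
    exact mul_nonneg hα (by linarith)
  obtain ⟨hmono, hm⟩ := hdecr
  have hW : 0 < ∑ i, n i := sum_pos (fun i _ ↦ hn i) univ_nonempty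
  refine ⟨0, (∑ i, n i * y i) / ∑ i, n i, ?_, fun _ ↦ le_rfl⟩
  simp only [zero_mul, zero_add]
  have hcov := Monovary.sum_mul_sum_le_sum_mul_sum_mul (fun i ↦ (hn i).le)
    (z := fun i ↦ f (x i)) fun i j hij ↦
      hmono (apply_mem_Icc_of_lt h01 h12 i) (apply_mem_Icc_of_lt h01 h12 j) hij.le
  exact sum_mul_sub_const_mul_nonneg hn hres (sum_secondDiffCoeffs x)
    (div_mul_cancel₀ _ hW.ne') hα hfx hm.le hcov

end ThreePoints

/-- For convex-shaped data, any concave curve `η` on `[x1, x3]` is weakly outperformed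
in weighted least squares by some straight line, strictly unless `η` is itself that
line; moreover if `η` is nondecreasing the line's slope can be chosen nonnegative. -/
theorem concave_fit_outperformed_by_line (x1 x2 x3 n1 n2 n3 y1 y2 y3 : ℝ)
    (h12 : x1 < x2) (h23 : x2 < x3)
    (hn1 : 0 < n1) (hn2 : 0 < n2) (hn3 : 0 < n3)
    (hconvex : (y2 - y1) / (x2 - x1) ≤ (y3 - y1) / (x3 - x1))
    (η : ℝ → ℝ) (hconc : ConcaveOn ℝ (Set.Icc x1 x3) η) :
    ∃ m q : ℝ,
      (n1 * (y1 - (m * x1 + q))^2 + n2 * (y2 - (m * x2 + q))^2 +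
         n3 * (y3 - (m * x3 + q))^2 ≤
       n1 * (y1 - η x1)^2 + n2 * (y2 - η x2)^2 + n3 * (y3 - η x3)^2) ∧
      ((n1 * (y1 - (m * x1 + q))^2 + n2 * (y2 - (m * x2 + q))^2 +
          n3 * (y3 - (m * x3 + q))^2 =
        n1 * (y1 - η x1)^2 + n2 * (y2 - η x2)^2 + n3 * (y3 - η x3)^2) →
        ∀ x ∈ Set.Icc x1 x3, η x = m * x + q) ∧
      (MonotoneOn η (Set.Icc x1 x3) → 0 ≤ m) := by
  have hn : ∀ i, 0 < ![n1, n2, n3] i := fun i ↦ by fin_cases i <;> assumption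
  obtain ⟨m, q, hcross, hslope⟩ := exists_affine_cross_nonneg (x := ![x1, x2, x3])
    (y := ![y1, y2, y3]) hn h12 h23 ((secondDiffCoeffs_dotProduct_nonneg_iff h12 h23 _).2 hconvex)
    hconc
  obtain ⟨hle, heq⟩ := sum_mul_sq_sub_le_of_cross_nonneg hn hcross
  refine ⟨m, q, by simpa [Fin.sum_univ_three] using hle, fun h ↦ ?_, hslope⟩
  have hfit := heq (by simpa [Fin.sum_univ_three] using h)
  exact hconc.eqOn_of_eq_at_three h12 h23 fun i ↦ (congrFun hfit i).symm
end

section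
/- Let n*, n^* > 0 and y*, y^*, z*, z^* be real numbers with y* ≥ y^* and z* < z^*. Set z̄ = (n*·z* + n^*·z^*)/(n* + n^*). Then n*·(y* − z*)² + n^*·(y^* − z^*)² > n*·(y* − z̄)² + n^*·(y^* − z̄)². In particular, there exists a constant c ∈ ℝ with n*·(y* − z*)² + n^*·(y^* − z^*)² > n*·(y* − c)² + n^*·(y^* − c)². -/
/-- Pooling two fitted values to their weighted average strictly decreases the
weighted residual sum of squares when the data ordering opposes the fitted
ordering. -/
theorem pooling_decreases_rss (ns nss ys yss zs zss zbar : ℝ)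
    (hns : 0 < ns) (hnss : 0 < nss)
    (hy : ys ≥ yss) (hz : zs < zss)
    (hzbar : zbar = (ns * zs + nss * zss) / (ns + nss)) :
    ns * (ys - zs)^2 + nss * (yss - zss)^2 >
      ns * (ys - zbar)^2 + nss * (yss - zbar)^2 ∧
    ∃ c : ℝ, ns * (ys - zs)^2 + nss * (yss - zss)^2 >
      ns * (ys - c)^2 + nss * (yss - c)^2 := by
  have hs : 0 < ns + nss := by linarith
  have key : (ns * (ys - zs)^2 + nss * (yss - zss)^2
      - (ns * (ys - zbar)^2 + nss * (yss - zbar)^2)) * (ns + nss)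
      = ns * nss * (zss - zs) * ((zss - zs) + 2 * (ys - yss)) := by
    rw [hzbar]; field_simp; ring
  have hpos : 0 < ns * nss * (zss - zs) * ((zss - zs) + 2 * (ys - yss)) := by
    have : 0 < (zss - zs) + 2 * (ys - yss) := by linarith
    exact mul_pos (mul_pos (mul_pos hns hnss) (sub_pos.2 hz)) this
  have hmain : ns * (ys - zs)^2 + nss * (yss - zss)^2 >
      ns * (ys - zbar)^2 + nss * (yss - zbar)^2 := by
    nlinarith [key, hpos, hs]
  exact ⟨hmain, zbar, hmain⟩
end

section
/- Let a < b be real numbers and θ2 > −a. Define x* = (b·(a+θ2) + a·(b+θ2)) / ((a+θ2) + (b+θ2)). Then (i) a < x* < (a+b)/2, and (ii) for all real θ0 and θ1, θ0 + θ1·x*/(x*+θ2) = ½·[(θ0 + θ1·a/(a+θ2)) + (θ0 + θ1·b/(b+θ2))]; that is, the Emax mean at x* equals the average of the Emax means at the endpoints a and b. (All denominators a+θ2, b+θ2, x*+θ2 are positive.) -/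
/-- The interior support point `x*` of the locally D-optimal design lies in
`(a, (a+b)/2)` and the Emax mean at `x*` is the average of the Emax means at the
endpoints `a` and `b`. -/
theorem D_optimal_interior_point (a b θ2 xs : ℝ)
    (hab : a < b) (hθ2 : -a < θ2)
    (hxs : xs = (b * (a + θ2) + a * (b + θ2)) / ((a + θ2) + (b + θ2))) :
    (0 < a + θ2 ∧ 0 < b + θ2 ∧ 0 < xs + θ2) ∧
    (a < xs ∧ xs < (a + b) / 2) ∧
    (∀ θ0 θ1 : ℝ,
      θ0 + θ1 * xs / (xs + θ2) =
        ((θ0 + θ1 * a / (a + θ2)) + (θ0 + θ1 * b / (b + θ2))) / 2) := by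
  have hA : 0 < a + θ2 := by linarith
  have hB : 0 < b + θ2 := by linarith
  have hS : 0 < (a + θ2) + (b + θ2) := by linarith
  have hxsθ : xs + θ2 = 2 * (a + θ2) * (b + θ2) / ((a + θ2) + (b + θ2)) := by
    rw [hxs]; field_simp; ring
  have hX : 0 < xs + θ2 := by
    rw [hxsθ]; positivity
  refine ⟨⟨hA, hB, hX⟩, ⟨?_, ?_⟩, ?_⟩
  · rw [hxs]
    rw [lt_div_iff₀ hS]
    nlinarith
  · rw [hxs, div_lt_div_iff₀ hS (by norm_num : (0:ℝ) < 2)]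
    nlinarith
  · intro θ0 θ1
    have key : xs / (xs + θ2) = (a / (a + θ2) + b / (b + θ2)) / 2 := by
      rw [hxsθ, hxs]
      field_simp
      ring
    rw [mul_div_assoc, key]
    field_simp
    ring
end

section
/- Let n ≥ 1, σ > 0, θ1 ≠ 0, and let x_1, …, x_n and θ2 be real numbers with θ2 + x_i ≠ 0 for all i. Define M_{l1,l2} = (1/n)·Σ_{i=1}^{n} x_i^{l1}/(θ2+x_i)^{l2}, V_{1,1} = M_{2,2} − M_{1,1}², V_{1,2} = M_{2,4} − M_{1,2}², Cov12 = M_{2,3} − M_{1,1}·M_{1,2}, D = V_{1,1}·V_{1,2} − Cov12², and assume D ≠ 0. Let I be the 3×3 matrix (n/σ²)·[[1, M_{1,1}, −θ1·M_{1,2}], [M_{1,1}, M_{2,2}, −θ1·M_{2,3}], [−θ1·M_{1,2}, −θ1·M_{2,3}, θ1²·M_{2,4}]]. For t = 1, 2, 3 let Q_t be the symmetric 3×3 matrix whose only nonzero entries are at positions (2,3), (3,2) and (3,3), given by: Q_1(2,3) = −(n/σ²)·M_{1,2}, Q_1(3,3) = (2nθ1/σ²)·M_{1,3}; Q_2(2,3)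 = −(n/σ²)·M_{2,3}, Q_2(3,3) = (2nθ1/σ²)·M_{2,4}; Q_3(2,3) = (nθ1/σ²)·M_{2,4}, Q_3(3,3) = −(2nθ1²/σ²)·M_{2,5}. Then ½·trace(I⁻¹·Q_1) = (V_{1,1}·M_{1,3} − Cov12·M_{1,2})/(θ1·D), ½·trace(I⁻¹·Q_2) = (V_{1,1}·M_{2,4} − Cov12·M_{2,3})/(θ1·D), and ½·trace(I⁻¹·Q_3) = −(V_{1,1}·M_{2,5} − Cov12·M_{2,4})/D. -/
/-!
Each `Q_t` is symmetric and vanishes outside the lower-right `2 × 2` block, so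
`trace (I⁻¹ Q_t)` only involves the entries `(2,3)`, `(3,2)`, `(3,3)` of `I⁻¹`. By cofactors these
are `c² θ1 Cov12 / det I` and `c² V11 / det I` with `c = n/σ²`, while `det I = c³ θ1² D`: `D` is
the Schur complement of the leading `1` in the moment matrix of `(1, x/(θ2+x), x/(θ2+x)²)`.
-/

open Matrix

section
variable {R : Type*} [CommRing R]

/-- The Emax information matrix divided by `n / σ²`: the second moments of the gradient
`(1, x / (θ2 + x), -θ x / (θ2 + x)²)` of the mean function in `(θ0, θ1, θ2)`. -/
def emaxInfoMatrix (θ m11 m12 m22 m23 m24 : R) : Matrix (Fin 3) (Fin 3) R :=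
  !![1, m11, -θ * m12; m11, m22, -θ * m23; -θ * m12, -θ * m23, θ ^ 2 * m24]

theorem Matrix.trace_mul_lowerRight_symm (A : Matrix (Fin 3) (Fin 3) R) (u w : R) :
    (A * !![0, 0, 0; 0, 0, u; 0, u, w]).trace = u * (A 1 2 + A 2 1) + w * A 2 2 := by
  simp [trace, mul_apply, Fin.sum_univ_three]
  ring

variable (c θ m11 m12 m22 m23 m24 : R)

theorem det_smul_emaxInfoMatrix :
    (c • emaxInfoMatrix θ m11 m12 m22 m23 m24).det =
      c ^ 3 * θ ^ 2 * ((m22 - m11 ^ 2) * (m24 - m12 ^ 2) - (m23 - m11 * m12) ^ 2) := by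
  simp [emaxInfoMatrix, det_fin_three]
  ring

theorem adjugate_smul_emaxInfoMatrix_one_two :
    (c • emaxInfoMatrix θ m11 m12 m22 m23 m24).adjugate 1 2 =
      c ^ 2 * θ * (m23 - m11 * m12) := by
  simp [emaxInfoMatrix, adjugate_fin_three]
  ring

theorem adjugate_smul_emaxInfoMatrix_two_one :
    (c • emaxInfoMatrix θ m11 m12 m22 m23 m24).adjugate 2 1 =
      c ^ 2 * θ * (m23 - m11 * m12) := by
  simp [emaxInfoMatrix, adjugate_fin_three]
  ring

theorem adjugate_smul_emaxInfoMatrix_two_two :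
    (c • emaxInfoMatrix θ m11 m12 m22 m23 m24).adjugate 2 2 = c ^ 2 * (m22 - m11 ^ 2) := by
  simp [emaxInfoMatrix, adjugate_fin_three]
  ring

end

theorem Matrix.inv_apply_eq_adjugate_div {n K : Type*} [Fintype n] [DecidableEq n] [Field K]
    (A : Matrix n n K) (i j : n) : A⁻¹ i j = A.adjugate i j / A.det := by
  rw [inv_def, Ring.inverse_eq_inv', smul_apply, smul_eq_mul, div_eq_inv_mul]

theorem trace_inv_smul_emaxInfoMatrix_mul {K : Type*} [Field K]
    (c θ m11 m12 m22 m23 m24 u w : K) :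
    ((c • emaxInfoMatrix θ m11 m12 m22 m23 m24)⁻¹ * !![0, 0, 0; 0, 0, u; 0, u, w]).trace =
      (2 * θ * (m23 - m11 * m12) * u + (m22 - m11 ^ 2) * w) /
        (c * θ ^ 2 * ((m22 - m11 ^ 2) * (m24 - m12 ^ 2) - (m23 - m11 * m12) ^ 2)) := by
  rcases eq_or_ne c 0 with rfl | hc
  · simp
  rw [Matrix.trace_mul_lowerRight_symm]
  simp only [inv_apply_eq_adjugate_div, det_smul_emaxInfoMatrix,
    adjugate_smul_emaxInfoMatrix_one_two, adjugate_smul_emaxInfoMatrix_two_one,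
    adjugate_smul_emaxInfoMatrix_two_two]
  rw [show ∀ d : K, c ^ 3 * θ ^ 2 * d = c ^ 2 * (c * θ ^ 2 * d) from fun d => by ring]
  simp only [mul_assoc (c ^ 2), mul_div_mul_left _ _ (pow_ne_zero 2 hc)]
  ring

theorem emax_firth_corrections_general (n : ℕ) (hn : 1 ≤ n)
    (σ θ1 : ℝ) (hσ : 0 < σ) (hθ1 : θ1 ≠ 0)
    (M : ℕ → ℕ → ℝ)
    (V11 V12 Cov12 D : ℝ)
    (hV11 : V11 = M 2 2 - (M 1 1) ^ 2)
    (hV12 : V12 = M 2 4 - (M 1 2) ^ 2)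
    (hCov : Cov12 = M 2 3 - M 1 1 * M 1 2)
    (hD : D = V11 * V12 - Cov12 ^ 2)
    (hDne : D ≠ 0)
    (I : Matrix (Fin 3) (Fin 3) ℝ)
    (hI : I = ((n : ℝ) / σ ^ 2) •
      !![1, M 1 1, -θ1 * M 1 2;
         M 1 1, M 2 2, -θ1 * M 2 3;
         -θ1 * M 1 2, -θ1 * M 2 3, θ1 ^ 2 * M 2 4])
    (Q1 Q2 Q3 : Matrix (Fin 3) (Fin 3) ℝ)
    (hQ1 : Q1 = !![0, 0, 0;
                   0, 0, -((n : ℝ) / σ ^ 2) * M 1 2;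
                   0, -((n : ℝ) / σ ^ 2) * M 1 2, (2 * (n : ℝ) * θ1 / σ ^ 2) * M 1 3])
    (hQ2 : Q2 = !![0, 0, 0;
                   0, 0, -((n : ℝ) / σ ^ 2) * M 2 3;
                   0, -((n : ℝ) / σ ^ 2) * M 2 3, (2 * (n : ℝ) * θ1 / σ ^ 2) * M 2 4])
    (hQ3 : Q3 = !![0, 0, 0;
                   0, 0, ((n : ℝ) * θ1 / σ ^ 2) * M 2 4;
                   0, ((n : ℝ) * θ1 / σ ^ 2) * M 2 4,
                     -(2 * (n : ℝ) * θ1 ^ 2 / σ ^ 2) * M 2 5]) :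
    (1 / 2 : ℝ) * (I⁻¹ * Q1).trace = (V11 * M 1 3 - Cov12 * M 1 2) / (θ1 * D) ∧
    (1 / 2 : ℝ) * (I⁻¹ * Q2).trace = (V11 * M 2 4 - Cov12 * M 2 3) / (θ1 * D) ∧
    (1 / 2 : ℝ) * (I⁻¹ * Q3).trace = -((V11 * M 2 5 - Cov12 * M 2 4) / D) := by
  have hc : (n : ℝ) / σ ^ 2 ≠ 0 := by
    have : (0 : ℝ) < n := by exact_mod_cast hn
    positivity
  have hI' : I = ((n : ℝ) / σ ^ 2) •
      emaxInfoMatrix θ1 (M 1 1) (M 1 2) (M 2 2) (M 2 3) (M 2 4) := hI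
  subst hQ1 hQ2 hQ3 hD hV11 hV12 hCov
  simp only [hI', trace_inv_smul_emaxInfoMatrix_mul]
  refine ⟨?_, ?_, ?_⟩ <;> field_simp <;> ring

/-- Closed-form Firth corrections `A_t = ½·trace(I⁻¹·Q_t)` of the Emax score function
in terms of the design moments, variances, covariance and `D`. -/
theorem emax_firth_corrections (n : ℕ) (hn : 1 ≤ n)
    (σ θ1 θ2 : ℝ) (hσ : 0 < σ) (hθ1 : θ1 ≠ 0)
    (x : Fin n → ℝ) (hx : ∀ i, θ2 + x i ≠ 0)
    (M : ℕ → ℕ → ℝ)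
    (hM : ∀ l1 l2 : ℕ, M l1 l2 = (1 / (n : ℝ)) * ∑ i, (x i) ^ l1 / (θ2 + x i) ^ l2)
    (V11 V12 Cov12 D : ℝ)
    (hV11 : V11 = M 2 2 - (M 1 1) ^ 2)
    (hV12 : V12 = M 2 4 - (M 1 2) ^ 2)
    (hCov : Cov12 = M 2 3 - M 1 1 * M 1 2)
    (hD : D = V11 * V12 - Cov12 ^ 2)
    (hDne : D ≠ 0)
    (I : Matrix (Fin 3) (Fin 3) ℝ)
    (hI : I = ((n : ℝ) / σ ^ 2) •
      !![1, M 1 1, -θ1 * M 1 2;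
         M 1 1, M 2 2, -θ1 * M 2 3;
         -θ1 * M 1 2, -θ1 * M 2 3, θ1 ^ 2 * M 2 4])
    (Q1 Q2 Q3 : Matrix (Fin 3) (Fin 3) ℝ)
    (hQ1 : Q1 = !![0, 0, 0;
                   0, 0, -((n : ℝ) / σ ^ 2) * M 1 2;
                   0, -((n : ℝ) / σ ^ 2) * M 1 2, (2 * (n : ℝ) * θ1 / σ ^ 2) * M 1 3])
    (hQ2 : Q2 = !![0, 0, 0;
                   0, 0, -((n : ℝ) / σ ^ 2) * M 2 3;
                   0, -((n : ℝ) / σ ^ 2) * M 2 3, (2 * (n : ℝ) * θ1 / σ ^ 2) * M 2 4])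
    (hQ3 : Q3 = !![0, 0, 0;
                   0, 0, ((n : ℝ) * θ1 / σ ^ 2) * M 2 4;
                   0, ((n : ℝ) * θ1 / σ ^ 2) * M 2 4,
                     -(2 * (n : ℝ) * θ1 ^ 2 / σ ^ 2) * M 2 5]) :
    (1 / 2 : ℝ) * (I⁻¹ * Q1).trace = (V11 * M 1 3 - Cov12 * M 1 2) / (θ1 * D) ∧
    (1 / 2 : ℝ) * (I⁻¹ * Q2).trace = (V11 * M 2 4 - Cov12 * M 2 3) / (θ1 * D) ∧
    (1 / 2 : ℝ) * (I⁻¹ * Q3).trace = -((V11 * M 2 5 - Cov12 * M 2 4) / D) :=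
  emax_firth_corrections_general n hn σ θ1 hσ hθ1 M V11 V12 Cov12 D hV11 hV12 hCov hD hDne I hI Q1
    Q2 Q3 hQ1 hQ2 hQ3
end
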